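/- arXiv:2510.26762 — 2 statements merged into one kernel-verified Lean document; each statement's English description precedes it below -/
import Mathlib

section
/- Let M and N be positive integers, let g : ℝ^{2M} → ℝ be Lebesgue integrable, and let ξ₁, …, ξ_N ∈ ℝ^{2M}. Let ω denote the standard symplectic bilinear form on ℝ^{2M}, ω(x, y) = Σ_{m=1}^{M} (x_m y_{M+m} − x_{M+m} y_m). Define the N×N complex matrix C by C_{n,n'} := (1/N) ∫_{ℝ^{2M}} exp(i · ω(ξ_n − ξ_{n'}, x)) · g(x) dx. Then C is Hermitian, and the sum of the absolute values of the eigenvalues of C is at most ∫_{ℝ^{2M}} |g(x)| dx. -/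
/-!
The matrix is a `g`-weighted integral of rank-one matrices: with `e(x) = (exp(i ω(ξₙ, x)))ₙ`,
`C = (1/N) ∫ g(x) e(x) e(x)ᴴ dx`, and `‖e(x)‖² = N`. For an orthonormal eigenbasis `(bᵢ)` of `C`
this gives `λᵢ = (1/N) ∫ g(x) |⟪bᵢ, e(x)⟫|² dx`, hence
`∑ |λᵢ| ≤ (1/N) ∫ |g(x)| ∑ᵢ |⟪bᵢ, e(x)⟫|² dx = (1/N) ∫ |g(x)| ‖e(x)‖² dx = ∫ |g|` by Parseval.
-/

open MeasureTheory ComplexConjugate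
open scoped InnerProductSpace Matrix

section WeightedGram

variable {X ι : Type*} [MeasurableSpace X]
variable (μ : Measure X) (g : X → ℝ) (u : X → EuclideanSpace ℂ ι)

noncomputable def weightedGram : Matrix ι ι ℂ :=
  Matrix.of fun i j => ∫ x, (g x : ℂ) * (u x i * conj (u x j)) ∂μ

theorem isHermitian_weightedGram : (weightedGram μ g u).IsHermitian := by
  ext i j
  simp only [weightedGram, Matrix.conjTranspose_apply, Matrix.of_apply, RCLike.star_def,
    ← integral_conj, map_mul, Complex.conj_ofReal, Complex.conj_conj]
  congr 1 with x
  ring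

variable [Fintype ι] {μ g u}

theorem integrable_mul_apply_mul_conj_apply (hg : AEStronglyMeasurable g μ)
    (hu : AEStronglyMeasurable u μ) (hgu : Integrable (fun x => g x * ‖u x‖ ^ 2) μ) (i j : ι) :
    Integrable (fun x => (g x : ℂ) * (u x i * conj (u x j))) μ := by
  refine hgu.norm.mono' (by fun_prop) (.of_forall fun x => ?_)
  have hi := PiLp.norm_apply_le (u x) i
  have hj := PiLp.norm_apply_le (u x) j
  simp only [norm_mul, Complex.norm_real, RCLike.norm_conj, Real.norm_eq_abs, abs_pow, abs_norm]
  gcongr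
  rw [sq]
  gcongr

theorem integrable_mul_norm_inner_sq (hg : AEStronglyMeasurable g μ)
    (hu : AEStronglyMeasurable u μ) (hgu : Integrable (fun x => g x * ‖u x‖ ^ 2) μ)
    (v : EuclideanSpace ℂ ι) :
    Integrable (fun x => g x * ‖⟪v, u x⟫_ℂ‖ ^ 2) μ := by
  refine (hgu.norm.const_mul (‖v‖ ^ 2)).mono' (by fun_prop) (.of_forall fun x => ?_)
  have := norm_inner_le_norm (𝕜 := ℂ) v (u x)
  simp only [norm_mul, Real.norm_eq_abs, abs_pow, abs_norm]
  calc |g x| * ‖⟪v, u x⟫_ℂ‖ ^ 2 ≤ |g x| * (‖v‖ * ‖u x‖) ^ 2 := by gcongr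
    _ = ‖v‖ ^ 2 * (|g x| * ‖u x‖ ^ 2) := by ring

theorem star_dotProduct_weightedGram_mulVec (hg : AEStronglyMeasurable g μ)
    (hu : AEStronglyMeasurable u μ) (hgu : Integrable (fun x => g x * ‖u x‖ ^ 2) μ)
    (v : EuclideanSpace ℂ ι) :
    star ⇑v ⬝ᵥ weightedGram μ g u *ᵥ ⇑v = ∫ x, ((g x * ‖⟪v, u x⟫_ℂ‖ ^ 2 : ℝ) : ℂ) ∂μ := by
  have hint := integrable_mul_apply_mul_conj_apply hg hu hgu
  have hpoint : ∀ x, (((g x * ‖⟪v, u x⟫_ℂ‖ ^ 2 : ℝ)) : ℂ) =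
      ∑ i, ∑ j, star (v i) * ((g x : ℂ) * (u x i * conj (u x j))) * v j := by
    intro x
    have hinner : ⟪v, u x⟫_ℂ = ∑ i, conj (v i) * u x i := by
      simp [PiLp.inner_apply, mul_comm]
    rw [Complex.ofReal_mul, Complex.ofReal_pow, ← Complex.mul_conj', hinner, map_sum,
      Finset.sum_mul_sum, Finset.mul_sum]
    refine Finset.sum_congr rfl fun i _ => ?_
    rw [Finset.mul_sum]
    refine Finset.sum_congr rfl fun j _ => ?_
    simp only [map_mul, Complex.conj_conj, RCLike.star_def]
    ring
  simp_rw [hpoint]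
  rw [integral_finsetSum _ fun i _ => integrable_finsetSum _ fun j _ =>
    ((hint i j).const_mul _).mul_const _]
  simp only [dotProduct, Matrix.mulVec, weightedGram, Matrix.of_apply, Pi.star_apply,
    Finset.mul_sum]
  refine Finset.sum_congr rfl fun i _ => ?_
  rw [integral_finsetSum _ fun j _ => ((hint i j).const_mul _).mul_const _]
  refine Finset.sum_congr rfl fun j _ => ?_
  rw [integral_mul_const, integral_const_mul]
  ring

theorem eigenvalues_weightedGram (hg : AEStronglyMeasurable g μ)
    (hu : AEStronglyMeasurable u μ) (hgu : Integrable (fun x => g x * ‖u x‖ ^ 2) μ)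
    [DecidableEq ι] (i : ι) :
    (isHermitian_weightedGram μ g u).eigenvalues i =
      ∫ x, g x * ‖⟪(isHermitian_weightedGram μ g u).eigenvectorBasis i, u x⟫_ℂ‖ ^ 2 ∂μ := by
  rw [Matrix.IsHermitian.eigenvalues_eq, star_dotProduct_weightedGram_mulVec hg hu hgu,
    integral_complex_ofReal]
  exact Complex.ofReal_re _

theorem sum_abs_eigenvalues_weightedGram_le (hg : AEStronglyMeasurable g μ)
    (hu : AEStronglyMeasurable u μ) (hgu : Integrable (fun x => g x * ‖u x‖ ^ 2) μ)
    [DecidableEq ι] :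
    ∑ i, |(isHermitian_weightedGram μ g u).eigenvalues i| ≤ ∫ x, |g x| * ‖u x‖ ^ 2 ∂μ := by
  set b := (isHermitian_weightedGram μ g u).eigenvectorBasis
  have habs : ∀ i x, |g x * ‖⟪b i, u x⟫_ℂ‖ ^ 2| = |g x| * ‖⟪b i, u x⟫_ℂ‖ ^ 2 := by
    intro i x
    rw [abs_mul, abs_sq]
  calc ∑ i, |(isHermitian_weightedGram μ g u).eigenvalues i|
      = ∑ i, |∫ x, g x * ‖⟪b i, u x⟫_ℂ‖ ^ 2 ∂μ| := by
        simp_rw [eigenvalues_weightedGram hg hu hgu, b]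
    _ ≤ ∑ i, ∫ x, |g x| * ‖⟪b i, u x⟫_ℂ‖ ^ 2 ∂μ := by
        gcongr with i
        simp only [← habs]
        exact abs_integral_le_integral_abs
    _ = ∫ x, ∑ i, |g x| * ‖⟪b i, u x⟫_ℂ‖ ^ 2 ∂μ := by
        refine (integral_finsetSum _ fun i _ => ?_).symm
        simpa only [habs] using (integrable_mul_norm_inner_sq hg hu hgu (b i)).abs
    _ = ∫ x, |g x| * ‖u x‖ ^ 2 ∂μ := by
        simp_rw [← Finset.mul_sum, b.sum_sq_norm_inner_right]

end WeightedGram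

theorem EuclideanSpace.norm_sq_eq_card_of_forall_norm_eq_one {ι : Type*} [Fintype ι]
    (v : EuclideanSpace ℂ ι) (hv : ∀ i, ‖v i‖ = 1) : ‖v‖ ^ 2 = Fintype.card ι := by
  simp [EuclideanSpace.norm_sq_eq, hv]

theorem Complex.exp_I_mul_ofReal_sub (a b : ℝ) :
    exp (I * ((a - b : ℝ) : ℂ)) = exp (I * a) * conj (exp (I * b)) := by
  rw [← exp_conj, map_mul, conj_I, conj_ofReal, ← exp_add]
  push_cast
  ring_nf

theorem stmt1_general {M N : ℕ} (hN : 0 < N)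
    (g : (Fin M → ℝ) × (Fin M → ℝ) → ℝ) (hg : Integrable g)
    (ξ : Fin N → (Fin M → ℝ) × (Fin M → ℝ))
    (ω : ((Fin M → ℝ) × (Fin M → ℝ)) → ((Fin M → ℝ) × (Fin M → ℝ)) → ℝ)
    (hω : ∀ x y, ω x y = ∑ m, (x.1 m * y.2 m - x.2 m * y.1 m))
    (C : Matrix (Fin N) (Fin N) ℂ)
    (hC : ∀ n n', C n n' = (1 / (N : ℂ)) *
      ∫ x, Complex.exp (Complex.I * (ω (ξ n - ξ n') x : ℂ)) * (g x : ℂ)) :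
    C.IsHermitian ∧
      ∀ hH : C.IsHermitian, ∑ i, |hH.eigenvalues i| ≤ ∫ x, |g x| := by
  have hω_sub : ∀ a b x, ω (a - b) x = ω a x - ω b x := by
    intro a b x
    simp only [hω, ← Finset.sum_sub_distrib, Prod.fst_sub, Prod.snd_sub, Pi.sub_apply]
    exact Finset.sum_congr rfl fun m _ => by ring
  set e : (Fin M → ℝ) × (Fin M → ℝ) → EuclideanSpace ℂ (Fin N) :=
    fun x => WithLp.toLp 2 fun n => Complex.exp (Complex.I * ω (ξ n) x)
  have he_cont : Continuous e := by
    simp only [e, hω]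
    fun_prop
  have he_norm : ∀ x, ‖e x‖ ^ 2 = N := fun x => by
    simpa using EuclideanSpace.norm_sq_eq_card_of_forall_norm_eq_one (e x) fun n => by
      simp [e, Complex.norm_exp]
  obtain rfl : C = weightedGram volume (fun x => g x / N) e := by
    ext n n'
    rw [hC, weightedGram, Matrix.of_apply, ← integral_const_mul]
    congr 1 with x
    simp only [e, hω_sub, Complex.exp_I_mul_ofReal_sub]
    push_cast
    ring
  refine ⟨isHermitian_weightedGram _ _ _, fun _ => ?_⟩
  have hN' : (N : ℝ) ≠ 0 := by positivity
  have hge : Integrable (fun x => g x / N * ‖e x‖ ^ 2) := by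
    simpa [he_norm, hN'] using hg
  calc _ ≤ ∫ x, |g x / N| * ‖e x‖ ^ 2 :=
        sum_abs_eigenvalues_weightedGram_le (hg.div_const _).aestronglyMeasurable
          he_cont.aestronglyMeasurable hge
    _ = ∫ x, |g x| := by
        congr 1 with x
        rw [he_norm, abs_div, Nat.abs_cast]
        field_simp

/-- **Extended Bochner bound, phase-space form (paper's Proposition 3).**
For an integrable `g : ℝ^{2M} → ℝ` (phase space of `M` modes, points written as pairs
`x = (q, p)` with `q, p : Fin M → ℝ`), phase-space points `ξ₁, …, ξ_N`, and the
standard symplectic form `ω (x, y) = ∑ m (x_m y_{M+m} − x_{M+m} y_m)`, the matrix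
`C_{n,n'} = (1/N) ∫ exp(i ω(ξ_n − ξ_{n'}, x)) g(x) dx` is Hermitian and the sum of the
absolute values of its eigenvalues is at most `∫ |g|`. -/
theorem stmt1 {M N : ℕ} (hM : 0 < M) (hN : 0 < N)
    (g : (Fin M → ℝ) × (Fin M → ℝ) → ℝ) (hg : Integrable g)
    (ξ : Fin N → (Fin M → ℝ) × (Fin M → ℝ))
    (ω : ((Fin M → ℝ) × (Fin M → ℝ)) → ((Fin M → ℝ) × (Fin M → ℝ)) → ℝ)
    (hω : ∀ x y, ω x y = ∑ m, (x.1 m * y.2 m - x.2 m * y.1 m))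
    (C : Matrix (Fin N) (Fin N) ℂ)
    (hC : ∀ n n', C n n' = (1 / (N : ℂ)) *
      ∫ x, Complex.exp (Complex.I * (ω (ξ n - ξ n') x : ℂ)) * (g x : ℂ)) :
    C.IsHermitian ∧
      ∀ hH : C.IsHermitian, ∑ i, |hH.eigenvalues i| ≤ ∫ x, |g x| :=
  stmt1_general hN g hg ξ ω hω C hC
end

section
/- For every natural number M ≥ 2, letting d := √((M − 2)/(2(M − 1))), one has (2/π) ∫_{ℝ²} e^{−2M(x² + y²)} · |1 + 8(M − 1)(x² + y²)·(M(x² + y²) − 1)| dx dy = 1/M − (16(M − 1)/(e·M²))·sinh(d) + (8·√(2(M − 2)(M − 1))/(e·M²))·cosh(d). -/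
/-!
In polar coordinates, and then with `u = r²`, the integral becomes `π ∫₀^∞ e^{-2Mu} |q(u)| du`
with `q(u) = 1 + 8(M-1)u(Mu-1) = 8M(M-1)(u - u₁)(u - u₂)`, `u₁,₂ = (1 ∓ d)/(2M)`. Without the
absolute value the integrand has the elementary primitive `-e^{-2Mu}(4(M-1)u² + 1/(2M))`, so
splitting `(0, ∞)` at the two roots evaluates the integral; the primitive at `u₁,₂` equals
`-2(M-1)(1 ∓ d) e^{±d-1}/M²`, and these terms recombine into `sinh d` and `cosh d`.
-/

open MeasureTheory Set Filter Real Topology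

theorem integral_Ioi_abs_of_hasDerivAt_of_sign_changes {f φ : ℝ → ℝ} {c a b l : ℝ}
    (hf : ContinuousOn f (Ici c)) (hφ : ∀ x ∈ Ici c, HasDerivAt φ (f x) x)
    (hlim : Tendsto φ atTop (𝓝 l)) (hca : c ≤ a) (hab : a ≤ b)
    (h₁ : ∀ x ∈ Icc c a, 0 ≤ f x) (h₂ : ∀ x ∈ Icc a b, f x ≤ 0)
    (h₃ : ∀ x ∈ Ioi b, 0 ≤ f x) :
    ∫ x in Ioi c, |f x| = l - φ c + 2 * (φ a - φ b) := by
  have hcb : c ≤ b := hca.trans hab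
  have hfcb : ContinuousOn f (Icc c b) := hf.mono Icc_subset_Ici_self
  have hfca : IntervalIntegrable f volume c a :=
    (hfcb.mono (Icc_subset_Icc_right hab)).intervalIntegrable_of_Icc hca
  have hfab : IntervalIntegrable f volume a b :=
    (hfcb.mono (Icc_subset_Icc_left hca)).intervalIntegrable_of_Icc hab
  have I₁ : ∫ x in c..a, |f x| = φ a - φ c := by
    rw [intervalIntegral.integral_congr (g := f) fun x hx => abs_of_nonneg
      (h₁ x (by rwa [uIcc_of_le hca] at hx))]
    refine intervalIntegral.integral_eq_sub_of_hasDerivAt (fun x hx => hφ x ?_) hfca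
    rw [uIcc_of_le hca] at hx
    exact hx.1
  have I₂ : ∫ x in a..b, |f x| = φ a - φ b := by
    rw [intervalIntegral.integral_congr (g := fun x => -f x) fun x hx => abs_of_nonpos
      (h₂ x (by rwa [uIcc_of_le hab] at hx)), intervalIntegral.integral_neg,
      intervalIntegral.integral_eq_sub_of_hasDerivAt (fun x hx => hφ x ?_) hfab, neg_sub]
    rw [uIcc_of_le hab] at hx
    exact hca.trans hx.1
  have hφ₃ : ∀ x ∈ Ici b, HasDerivAt φ (f x) x := fun x hx => hφ x (hcb.trans hx)
  have I₃ : ∫ x in Ioi b, |f x| = l - φ b := by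
    rw [setIntegral_congr_fun measurableSet_Ioi fun x hx => abs_of_nonneg (h₃ x hx)]
    exact integral_Ioi_of_hasDerivAt_of_nonneg' hφ₃ h₃ hlim
  have hint₃ : IntegrableOn (fun x => |f x|) (Ioi b) :=
    (integrableOn_Ioi_deriv_of_nonneg' hφ₃ h₃ hlim).congr_fun
      (fun x hx => (abs_of_nonneg (h₃ x hx)).symm) measurableSet_Ioi
  rw [← Ioc_union_Ioi_eq_Ioi hcb, setIntegral_union Ioc_disjoint_Ioi_same measurableSet_Ioi
    (hfcb.abs.integrableOn_Icc.mono_set Ioc_subset_Icc_self) hint₃,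
    ← intervalIntegral.integral_of_le hcb,
    ← intervalIntegral.integral_add_adjacent_intervals hfca.abs hfab.abs, I₁, I₂, I₃]
  ring

theorem integral_comp_sq_add_sq (F : ℝ → ℝ) :
    ∫ p : ℝ × ℝ, F (p.1 ^ 2 + p.2 ^ 2) = π * ∫ u in Ioi 0, F u := by
  have hpolar (p : ℝ × ℝ) :
      (polarCoord.symm p).1 ^ 2 + (polarCoord.symm p).2 ^ 2 = p.1 ^ 2 := by
    simp only [polarCoord_symm_apply]
    linear_combination p.1 ^ 2 * sin_sq_add_cos_sq p.2
  have hsubst : ∫ r in Ioi (0:ℝ), r * F (r ^ 2) = (1 / 2) * ∫ u in Ioi 0, F u := by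
    rw [← integral_comp_rpow_Ioi_of_pos (g := F) two_pos, ← integral_const_mul]
    congr 1 with r
    rw [smul_eq_mul, rpow_two, show (2 : ℝ) - 1 = 1 by norm_num, rpow_one]
    ring
  rw [← integral_comp_polarCoord_symm, polarCoord_target]
  simp_rw [hpolar, smul_eq_mul]
  have hprod := setIntegral_prod_mul (μ := volume) (ν := volume) (fun r => r * F (r ^ 2))
    (fun _ => (1:ℝ)) (Ioi 0) (Ioo (-π) π)
  simp only [mul_one] at hprod
  rw [Measure.volume_eq_prod, hprod, hsubst, setIntegral_const, smul_eq_mul, mul_one,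
    measureReal_def, Real.volume_Ioo, ENNReal.toReal_ofReal (by linarith [pi_pos])]
  ring

/-- On the diagonal slice, `W(α) = (2^M/π^M) · dickeWigner M |α|²`. -/
noncomputable def dickeWigner (m u : ℝ) : ℝ :=
  exp (-(2 * m * u)) * (1 + 8 * (m - 1) * u * (m * u - 1))

noncomputable def dickeWignerPrimitive (m u : ℝ) : ℝ :=
  -(exp (-(2 * m * u)) * (4 * (m - 1) * u ^ 2 + 1 / (2 * m)))

theorem hasDerivAt_dickeWignerPrimitive {m : ℝ} (hm : m ≠ 0) (u : ℝ) :
    HasDerivAt (dickeWignerPrimitive m) (dickeWigner m u) u := by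
  have hexp : HasDerivAt (fun u => exp (-(2 * m * u))) (-(2 * m) * exp (-(2 * m * u))) u := by
    simpa [mul_comm] using ((hasDerivAt_id u).const_mul (2 * m)).neg.exp
  have hpoly : HasDerivAt (fun u => 4 * (m - 1) * u ^ 2 + 1 / (2 * m)) (8 * (m - 1) * u) u := by
    refine (((hasDerivAt_pow 2 u).const_mul (4 * (m - 1))).add_const (1 / (2 * m))).congr_deriv ?_
    push_cast
    ring
  refine (hexp.mul hpoly).neg.congr_deriv ?_
  rw [dickeWigner]
  field_simp
  ring

theorem tendsto_dickeWignerPrimitive_atTop {m : ℝ} (hm : 0 < m) :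
    Tendsto (dickeWignerPrimitive m) atTop (𝓝 0) := by
  have hdecay (s : ℝ) := tendsto_rpow_mul_exp_neg_mul_atTop_nhds_zero s (2 * m) (by positivity)
  have hlim := (((hdecay 2).const_mul (4 * (m - 1))).add ((hdecay 0).const_mul (1 / (2 * m)))).neg
  rw [mul_zero, mul_zero, add_zero, neg_zero] at hlim
  refine hlim.congr fun u => ?_
  simp only [dickeWignerPrimitive, rpow_two, rpow_zero, neg_mul]
  ring

theorem dickeWigner_eq_mul {m d : ℝ} (hm : m ≠ 0) (hd : 2 * (m - 1) * d ^ 2 = m - 2) (u : ℝ) :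
    dickeWigner m u = 8 * m * (m - 1) * exp (-(2 * m * u)) *
      ((u - (1 - d) / (2 * m)) * (u - (1 + d) / (2 * m))) := by
  have hq : 1 + 8 * (m - 1) * u * (m * u - 1) =
      8 * m * (m - 1) * ((u - (1 - d) / (2 * m)) * (u - (1 + d) / (2 * m))) := by
    field_simp
    linear_combination 4 * hd
  rw [dickeWigner, hq]
  ring

theorem dickeWignerPrimitive_root {m d : ℝ} (hm : m ≠ 0) (hd : 2 * (m - 1) * d ^ 2 = m - 2) :
    dickeWignerPrimitive m ((1 - d) / (2 * m)) =
      -(2 * (m - 1) * (1 - d) / m ^ 2 * exp (d - 1)) := by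
  have hexp : -(2 * m * ((1 - d) / (2 * m))) = d - 1 := by field_simp; ring
  rw [dickeWignerPrimitive, hexp]
  congr 1
  rw [mul_comm]
  congr 1
  field_simp
  linear_combination 2 * hd

theorem integral_abs_dickeWigner {m d : ℝ} (hm : 1 < m) (hd₀ : 0 ≤ d)
    (hd : 2 * (m - 1) * d ^ 2 = m - 2) :
    ∫ u in Ioi 0, |dickeWigner m u| =
      1 / (2 * m) - 4 * (m - 1) / m ^ 2 * ((1 - d) * exp (d - 1) - (1 + d) * exp (-d - 1)) := by
  have hm₀ : m ≠ 0 := by positivity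
  have hd₁ : d ≤ 1 := by
    have : d ^ 2 ≤ 1 := le_of_mul_le_mul_left (by linarith : (m - 1) * d ^ 2 ≤ (m - 1) * 1)
      (by linarith)
    nlinarith
  set u₁ := (1 - d) / (2 * m)
  set u₂ := (1 + d) / (2 * m)
  have hu : u₁ ≤ u₂ := div_le_div_of_nonneg_right (by linarith) (by positivity)
  have hpos (u : ℝ) : 0 < 8 * m * (m - 1) * exp (-(2 * m * u)) := by
    have : 0 < m - 1 := by linarith
    positivity
  have h₁ (u : ℝ) (hu' : u ∈ Icc 0 u₁) : 0 ≤ dickeWigner m u := by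
    rw [dickeWigner_eq_mul hm₀ hd]
    exact mul_nonneg (hpos u).le
      (mul_nonneg_of_nonpos_of_nonpos (by linarith [hu'.2]) (by linarith [hu'.2]))
  have h₂ (u : ℝ) (hu' : u ∈ Icc u₁ u₂) : dickeWigner m u ≤ 0 := by
    rw [dickeWigner_eq_mul hm₀ hd]
    exact mul_nonpos_of_nonneg_of_nonpos (hpos u).le
      (mul_nonpos_of_nonneg_of_nonpos (sub_nonneg.2 hu'.1) (sub_nonpos.2 hu'.2))
  have h₃ (u : ℝ) (hu' : u ∈ Ioi u₂) : 0 ≤ dickeWigner m u := by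
    rw [dickeWigner_eq_mul hm₀ hd]
    exact mul_nonneg (hpos u).le
      (mul_nonneg (by linarith [hu'.out]) (by linarith [hu'.out]))
  have hroot₂ := dickeWignerPrimitive_root hm₀ (d := -d) (by rw [neg_sq]; exact hd)
  rw [sub_neg_eq_add] at hroot₂
  have hzero : dickeWignerPrimitive m 0 = -(1 / (2 * m)) := by simp [dickeWignerPrimitive]
  rw [integral_Ioi_abs_of_hasDerivAt_of_sign_changes (by unfold dickeWigner; fun_prop)
    (fun u _ => hasDerivAt_dickeWignerPrimitive hm₀ u)
    (tendsto_dickeWignerPrimitive_atTop (by linarith)) (by positivity) hu h₁ h₂ h₃,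
    hzero, dickeWignerPrimitive_root hm₀ hd, hroot₂]
  ring

/-- **Absolute Wigner volume of the two-excitation Dicke state `|D₂^M⟩` on the
diagonal slice.** For `M ≥ 2`, with `d = √((M−2)/(2(M−1)))`,
`(2/π) ∫_{ℝ²} e^{−2M(x²+y²)} |1 + 8(M−1)(x²+y²)(M(x²+y²) − 1)| dx dy
  = 1/M − (16(M−1)/(e M²)) sinh d + (8√(2(M−2)(M−1))/(e M²)) cosh d`. -/
theorem stmt9 (M : ℕ) (hM : 2 ≤ M) :
    (2 / Real.pi) * ∫ p : ℝ × ℝ,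
        Real.exp (-(2 * (M : ℝ) * (p.1 ^ 2 + p.2 ^ 2))) *
          |1 + 8 * ((M : ℝ) - 1) * (p.1 ^ 2 + p.2 ^ 2) *
            ((M : ℝ) * (p.1 ^ 2 + p.2 ^ 2) - 1)| =
      1 / (M : ℝ)
        - (16 * ((M : ℝ) - 1) / (Real.exp 1 * (M : ℝ) ^ 2)) *
            Real.sinh (Real.sqrt (((M : ℝ) - 2) / (2 * ((M : ℝ) - 1))))
        + (8 * Real.sqrt (2 * ((M : ℝ) - 2) * ((M : ℝ) - 1)) / (Real.exp 1 * (M : ℝ) ^ 2)) *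
            Real.cosh (Real.sqrt (((M : ℝ) - 2) / (2 * ((M : ℝ) - 1)))) := by
  set m : ℝ := (M : ℝ)
  have hm : (2 : ℝ) ≤ m := Nat.ofNat_le_cast.mpr hM
  have hm₁ : m - 1 ≠ 0 := by linarith
  set d := √((m - 2) / (2 * (m - 1)))
  have hd : 2 * (m - 1) * d ^ 2 = m - 2 := by
    rw [sq_sqrt (div_nonneg (by linarith) (by linarith))]
    field_simp
  have hsqrt : √(2 * (m - 2) * (m - 1)) = 2 * (m - 1) * d := by
    rw [← sqrt_sq (mul_nonneg (by linarith) (sqrt_nonneg _))]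
    congr 1
    linear_combination (-2 * (m - 1)) * hd
  have hintegrand : ∀ u, exp (-(2 * m * u)) * |1 + 8 * (m - 1) * u * (m * u - 1)| =
      |dickeWigner m u| := fun u => by rw [dickeWigner, abs_mul, abs_of_pos (exp_pos _)]
  simp_rw [hintegrand]
  rw [integral_comp_sq_add_sq (fun u => |dickeWigner m u|),
    integral_abs_dickeWigner (by linarith) (sqrt_nonneg _) hd, hsqrt, sinh_eq, cosh_eq,
    exp_sub, exp_sub]
  field_simp
  ring
end
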